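/- Let p > 1, let Ω ⊆ ℝ^N be open, let 0 < a ≤ ∞, let u : Ω → ℝ be a C² function with u(Ω) ⊆ (0, a), and let G : (0, a) → ℝ be a C² function that is increasing and concave, i.e. G' > 0 and G'' ≤ 0 on (0, a). If x ∈ Ω and ∇u(x) ≠ 0, then the flux of G∘u is differentiable at x and −Δ_p(G∘u)(x) ≥ G'(u(x))^{p−1}·(−Δ_p u(x)). -/

import Mathlib

/-!
Near `x` the chain rule gives `∇(G ∘ u) = G'(u) ∇u`, hence `V_{G∘u} = G'(u)^(p-1) V_u` since
`G' > 0`. The product rule for the divergence then yields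
`Δ_p (G ∘ u) = G'(u)^(p-1) Δ_p u + (p-1) G'(u)^(p-2) G''(u) ⟨∇u, V_u⟩`,
and the last term is `≤ 0` because `G'' ≤ 0` and `⟨∇u, V_u⟩ = ‖∇u‖^p ≥ 0`.
-/

open Real Set Metric MeasureTheory

/-- The "flux" of `u` at `x`: `‖∇u(x)‖^(p-2) ∇u(x)` (equal to `0` when `∇u(x) = 0`,
by the junk-value conventions of `Real.rpow`, since `p ≠ 2` gives `0 ^ (p-2) = 0` and
for `p = 2` the scalar multiplies the zero vector). -/
noncomputable def flux {N : ℕ} (p : ℝ) (u : EuclideanSpace ℝ (Fin N) → ℝ)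
    (x : EuclideanSpace ℝ (Fin N)) : EuclideanSpace ℝ (Fin N) :=
  ‖gradient u x‖ ^ (p - 2) • gradient u x

/-- The divergence of a vector field `V` at `x`: `∑ i, ∂V_i/∂x_i (x)`. -/
noncomputable def pdiv {N : ℕ} (V : EuclideanSpace ℝ (Fin N) → EuclideanSpace ℝ (Fin N))
    (x : EuclideanSpace ℝ (Fin N)) : ℝ :=
  ∑ i : Fin N, fderiv ℝ V x (EuclideanSpace.single i 1) i

open Topology Filter

theorem ContDiffAt.gradient_right {F : Type*} [NormedAddCommGroup F] [InnerProductSpace ℝ F]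
    [CompleteSpace F] {f : F → ℝ} {x : F} {m n : WithTop ℕ∞} (hf : ContDiffAt ℝ n f x)
    (hmn : m + 1 ≤ n) : ContDiffAt ℝ m (gradient f) x :=
  (InnerProductSpace.toDual ℝ F).symm.toContinuousLinearEquiv.contDiff.comp_contDiffAt x
    (hf.fderiv_right hmn)

theorem HasDerivAt.gradient_comp {F : Type*} [NormedAddCommGroup F] [InnerProductSpace ℝ F]
    [CompleteSpace F] {G : ℝ → ℝ} {g : ℝ} {u : F → ℝ} {x : F} (hG : HasDerivAt G g (u x))
    (hu : DifferentiableAt ℝ u x) : gradient (G ∘ u) x = g • gradient u x := by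
  refine HasGradientAt.gradient ?_
  rw [hasGradientAt_iff_hasFDerivAt, map_smul, toDual_gradient]
  exact hG.comp_hasFDerivAt x hu.hasFDerivAt

section

variable {N : ℕ}

theorem flux_comp {p g : ℝ} {G : ℝ → ℝ} {u : EuclideanSpace ℝ (Fin N) → ℝ}
    {x : EuclideanSpace ℝ (Fin N)} (hG : HasDerivAt G g (u x)) (hg : 0 < g)
    (hu : DifferentiableAt ℝ u x) : flux p (G ∘ u) x = g ^ (p - 1) • flux p u x := by
  have hpow : g ^ (p - 1) = g ^ (p - 2) * g := by
    rw [← rpow_add_one hg.ne']; ring_nf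
  rw [flux, flux, hG.gradient_comp hu, norm_smul, norm_of_nonneg hg.le,
    mul_rpow hg.le (norm_nonneg _), hpow, smul_smul, smul_smul]
  congr 1
  ring

theorem differentiableAt_flux (p : ℝ) {u : EuclideanSpace ℝ (Fin N) → ℝ}
    {x : EuclideanSpace ℝ (Fin N)} (hu : ContDiffAt ℝ 2 u x) (hx : gradient u x ≠ 0) :
    DifferentiableAt ℝ (flux p u) x := by
  have hgrad : DifferentiableAt ℝ (gradient u) x :=
    (hu.gradient_right (m := 1) (by norm_num)).differentiableAt one_ne_zero
  exact ((hgrad.norm ℝ hx).rpow_const (Or.inl (norm_ne_zero_iff.mpr hx))).smul hgrad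

theorem fderiv_apply_flux_nonneg (p : ℝ) (u : EuclideanSpace ℝ (Fin N) → ℝ)
    (x : EuclideanSpace ℝ (Fin N)) : 0 ≤ fderiv ℝ u x (flux p u x) := by
  rw [← inner_gradient_left, flux, inner_smul_right, real_inner_self_eq_norm_sq]
  positivity

theorem Filter.EventuallyEq.pdiv_eq {V W : EuclideanSpace ℝ (Fin N) → EuclideanSpace ℝ (Fin N)}
    {x : EuclideanSpace ℝ (Fin N)} (h : V =ᶠ[𝓝 x] W) : pdiv V x = pdiv W x := by
  rw [pdiv, pdiv, h.fderiv_eq]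

theorem ContinuousLinearMap.sum_apply_single_mul {ι : Type*} [Fintype ι] [DecidableEq ι]
    (L : EuclideanSpace ℝ ι →L[ℝ] ℝ) (v : EuclideanSpace ℝ ι) :
    ∑ i, L (EuclideanSpace.single i 1) * v i = L v := by
  conv_rhs => rw [← (EuclideanSpace.basisFun ι ℝ).sum_repr v]
  simp [map_sum, mul_comm]

theorem pdiv_smul {φ : EuclideanSpace ℝ (Fin N) → ℝ}
    {V : EuclideanSpace ℝ (Fin N) → EuclideanSpace ℝ (Fin N)} {x : EuclideanSpace ℝ (Fin N)}
    (hφ : DifferentiableAt ℝ φ x) (hV : DifferentiableAt ℝ V x) :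
    pdiv (fun y => φ y • V y) x = φ x * pdiv V x + fderiv ℝ φ x (V x) := by
  simp only [pdiv, fderiv_fun_smul hφ hV, Finset.mul_sum,
    ← (fderiv ℝ φ x).sum_apply_single_mul (V x), ← Finset.sum_add_distrib]
  simp

end

theorem stmt1_general {N : ℕ} (p : ℝ) (hp : 1 < p)
    (Ω : Set (EuclideanSpace ℝ (Fin N))) (hΩ : IsOpen Ω)
    (a : EReal)
    (u : EuclideanSpace ℝ (Fin N) → ℝ) (hu : ContDiffOn ℝ 2 u Ω)
    (hmap : ∀ y ∈ Ω, 0 < u y ∧ (u y : EReal) < a)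
    (G : ℝ → ℝ) (hG : ContDiffOn ℝ 2 G {t : ℝ | 0 < t ∧ (t : EReal) < a})
    (hG' : ∀ t : ℝ, 0 < t → (t : EReal) < a → 0 < deriv G t)
    (hG'' : ∀ t : ℝ, 0 < t → (t : EReal) < a → deriv (deriv G) t ≤ 0)
    (x : EuclideanSpace ℝ (Fin N)) (hx : x ∈ Ω) (hgrad : gradient u x ≠ 0) :
    DifferentiableAt ℝ (flux p (G ∘ u)) x ∧
    -pdiv (flux p (G ∘ u)) x ≥ deriv G (u x) ^ (p - 1) * (-pdiv (flux p u) x) := by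
  set S := {t : ℝ | 0 < t ∧ (t : EReal) < a}
  have hS : IsOpen S := (isOpen_lt continuous_const continuous_id).and
    (isOpen_lt continuous_coe_real_ereal continuous_const)
  have hux : ContDiffAt ℝ 2 u x := hu.contDiffAt (hΩ.mem_nhds hx)
  have hGux : ContDiffAt ℝ 1 (deriv G) (u x) :=
    (hG.deriv_of_isOpen hS (by norm_num)).contDiffAt (hS.mem_nhds (hmap x hx))
  have hc : 0 < deriv G (u x) := hG' _ (hmap x hx).1 (hmap x hx).2
  set φ := fun y => deriv G (u y) ^ (p - 1)
  set k := (p - 1) * deriv G (u x) ^ (p - 1 - 1) * deriv (deriv G) (u x)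
  have hφ : HasFDerivAt φ (k • fderiv ℝ u x) x := by
    have := ((hGux.differentiableAt one_ne_zero).hasDerivAt.comp_hasFDerivAt x
      (hux.differentiableAt two_ne_zero).hasFDerivAt).rpow_const (p := p - 1) (Or.inl hc.ne')
    rwa [smul_smul] at this
  have hk : k ≤ 0 :=
    mul_nonpos_of_nonneg_of_nonpos (by have := hp.le; positivity)
      (hG'' _ (hmap x hx).1 (hmap x hx).2)
  have hflux : flux p (G ∘ u) =ᶠ[𝓝 x] fun y => φ y • flux p u y := by
    filter_upwards [hΩ.mem_nhds hx] with y hy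
    exact flux_comp (((hG.contDiffAt (hS.mem_nhds (hmap y hy))).differentiableAt
      two_ne_zero).hasDerivAt) (hG' _ (hmap y hy).1 (hmap y hy).2)
      ((hu.contDiffAt (hΩ.mem_nhds hy)).differentiableAt two_ne_zero)
  have hFu := differentiableAt_flux p hux hgrad
  refine ⟨hflux.differentiableAt_iff.mpr (hφ.differentiableAt.smul hFu), ?_⟩
  have hcross : k * fderiv ℝ u x (flux p u x) ≤ 0 :=
    mul_nonpos_of_nonpos_of_nonneg hk (fderiv_apply_flux_nonneg p u x)
  rw [hflux.pdiv_eq, pdiv_smul hφ.differentiableAt hFu, hφ.fderiv]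
  simp only [_root_.smul_apply, smul_eq_mul]
  linarith

/-- Lemma 2.1: for `u` of class `C²` on the open set `Ω` with values in
`(0, a)` and `G` of class `C²` on `(0, a)` increasing and concave (`G' > 0`, `G'' ≤ 0`),
at any `x ∈ Ω` with `∇u(x) ≠ 0` one has `-Δ_p(G∘u)(x) ≥ G'(u(x))^(p-1) (-Δ_p u(x))`. -/
theorem stmt1 {N : ℕ} (p : ℝ) (hp : 1 < p)
    (Ω : Set (EuclideanSpace ℝ (Fin N))) (hΩ : IsOpen Ω)
    (a : EReal) (ha : 0 < a)
    (u : EuclideanSpace ℝ (Fin N) → ℝ) (hu : ContDiffOn ℝ 2 u Ω)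
    (hmap : ∀ y ∈ Ω, 0 < u y ∧ (u y : EReal) < a)
    (G : ℝ → ℝ) (hG : ContDiffOn ℝ 2 G {t : ℝ | 0 < t ∧ (t : EReal) < a})
    (hG' : ∀ t : ℝ, 0 < t → (t : EReal) < a → 0 < deriv G t)
    (hG'' : ∀ t : ℝ, 0 < t → (t : EReal) < a → deriv (deriv G) t ≤ 0)
    (x : EuclideanSpace ℝ (Fin N)) (hx : x ∈ Ω) (hgrad : gradient u x ≠ 0) :
    DifferentiableAt ℝ (flux p (G ∘ u)) x ∧
    -pdiv (flux p (G ∘ u)) x ≥ deriv G (u x) ^ (p - 1) * (-pdiv (flux p u) x) :=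
  stmt1_general p hp Ω hΩ a u hu hmap G hG hG' hG'' x hx hgrad
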